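/- (Proposition 3.1) Assume the quasi-Kähler (class W₃) condition, let R be a quadrilinear form on V, and assume the identity τ(R) + τ** = -(1/2)‖∇J‖² (valid on quasi-Kähler manifolds with Norden metric), where τ** = Σ g^{ij} g^{ks} R(e_i, e_k, J e_s, J e_j) and ‖∇J‖² = Σ g^{ij} g^{ks} g(N(e_i,e_k), N(e_j,e_s)). Let K(x,y,z,w) = (1/4)(2R(x,y,z,w) - 2R(x,y,Jz,Jw) + P(x,y,z,w)). Then the manifold is isotropic-Kähler, i.e. ‖∇J‖² = 0, if and only if τ(R) = τ(K). -/

import Mathlib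

/-- The Ricci tensor of a quadrilinear form `L`: `ρ(L)(y,z) = g^{ij} L(e_i,y,z,e_j)`. -/
noncomputable def ricci {V ι : Type*} [Fintype ι]
    (ginv : ι → ι → ℝ) (e : ι → V) (L : V → V → V → V → ℝ) (y z : V) : ℝ :=
  ∑ i, ∑ j, ginv i j * L (e i) y z (e j)

/-- The scalar curvature of a quadrilinear form `L`: `τ(L) = g^{ks} ρ(L)(e_k,e_s)`. -/
noncomputable def scalarCurv {V ι : Type*} [Fintype ι]
    (ginv : ι → ι → ℝ) (e : ι → V) (L : V → V → V → V → ℝ) : ℝ :=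
  ∑ k, ∑ s, ginv k s * ricci ginv e L (e k) (e s)

/-!
Contract with the reciprocal basis `e^i = g^{ij} e_j`. By linearity of `τ` in its argument,
`τ(K) = ½ τ(R) - ½ τ** + ¼ τ(P)`. The second term of `τ(P)` contains the contraction
`g^{ks} N(e_k, e_s)`, which vanishes: by the `W₃` identity it is minus half the trace of
`N_z = N(z, ·)`, and `N_z` anticommutes with `J`, so its trace is zero. The first term `C` of
`τ(P)` and `A = ‖∇J‖²` are both full contractions of `F(x,y,z) = g(N(x,y),z)` against itself;
expanding one factor of `A` by `F(x,y,z) = -F(y,z,x) - F(z,x,y)` and using `F(x,y,z) = F(x,z,y)`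
gives `A + 2C = 0`. With `τ + τ** = -½ A` this yields `τ(K) = τ(R) + ‖∇J‖²/8`.
-/

section ScalarCurv

variable {V ι : Type*} [Fintype ι] (ginv : ι → ι → ℝ) (e : ι → V)

theorem scalarCurv_eq_sum (L : V → V → V → V → ℝ) :
    scalarCurv ginv e L
      = ∑ i, ∑ j, ∑ k, ∑ s, ginv i j * ginv k s * L (e i) (e k) (e s) (e j) := by
  simp only [scalarCurv, ricci, Finset.mul_sum]
  simp only [← Fintype.sum_prod_type']
  exact Fintype.sum_bijective (fun x => (x.2.2.1, x.2.2.2, x.1, x.2.1))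
    (Function.Involutive.bijective fun _ => rfl) _ _ fun _ => by ring

theorem scalarCurv_add (L₁ L₂ : V → V → V → V → ℝ) :
    scalarCurv ginv e (L₁ + L₂) = scalarCurv ginv e L₁ + scalarCurv ginv e L₂ := by
  simp only [scalarCurv, ricci, Pi.add_apply, mul_add, Finset.sum_add_distrib]

theorem scalarCurv_sub (L₁ L₂ : V → V → V → V → ℝ) :
    scalarCurv ginv e (L₁ - L₂) = scalarCurv ginv e L₁ - scalarCurv ginv e L₂ := by
  simp only [scalarCurv, ricci, Pi.sub_apply, mul_sub, Finset.sum_sub_distrib]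

theorem scalarCurv_smul (c : ℝ) (L : V → V → V → V → ℝ) :
    scalarCurv ginv e (c • L) = c * scalarCurv ginv e L := by
  simp only [scalarCurv, ricci, Pi.smul_apply, smul_eq_mul, Finset.mul_sum, mul_left_comm _ c]

end ScalarCurv

theorem LinearMap.trace_eq_zero_of_anticomm {R M : Type*} [CommRing R] [IsAddTorsionFree R]
    [AddCommGroup M] [Module R M] [Module.Free R M] [Module.Finite R M] {J f : M →ₗ[R] M}
    (hJ : ∀ x, J (J x) = -x) (hf : ∀ x, f (J x) = -J (f x)) : trace R M f = 0 := by
  have hfJJ : f ∘ₗ J ∘ₗ J = -f := LinearMap.ext fun x => by simp [hJ]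
  have hJf : J ∘ₗ f = -(f ∘ₗ J) := LinearMap.ext fun x => by simp [hf]
  have h : trace R M (f ∘ₗ J ∘ₗ J) = -trace R M (f ∘ₗ J ∘ₗ J) :=
    calc trace R M ((f ∘ₗ J) ∘ₗ J)
        = trace R M (J ∘ₗ f ∘ₗ J) := trace_comp_comm' _ _
      _ = trace R M (-(f ∘ₗ J ∘ₗ J)) := by
        rw [← LinearMap.comp_assoc, hJf, LinearMap.neg_comp, LinearMap.comp_assoc]
      _ = -trace R M (f ∘ₗ J ∘ₗ J) := map_neg _ _
  rw [hfJJ, map_neg, neg_neg] at h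
  exact self_eq_neg.mp h.symm

section MetricDual

variable {V ι : Type*} [AddCommGroup V] [Module ℝ V] [Fintype ι]

noncomputable def metricDual (e : ι → V) (ginv : ι → ι → ℝ) (i : ι) : V := ∑ j, ginv i j • e j

theorem sum_ginv_mul_apply (e : ι → V) (ginv : ι → ι → ℝ) (φ : V →ₗ[ℝ] ℝ) (i : ι) :
    ∑ j, ginv i j * φ (e j) = φ (metricDual e ginv i) := by
  simp [metricDual, map_sum]

theorem sum_sum_ginv_mul_ginv_mul_apply (e : ι → V) (ginv : ι → ι → ℝ)
    (B : V →ₗ[ℝ] V →ₗ[ℝ] ℝ) (i k : ι) :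
    ∑ j, ∑ s, ginv i j * ginv k s * B (e j) (e s)
      = B (metricDual e ginv i) (metricDual e ginv k) := by
  simp only [metricDual, map_sum, map_smul, LinearMap.sum_apply, LinearMap.smul_apply,
    smul_eq_mul, Finset.mul_sum, mul_assoc]
  rw [Finset.sum_comm]
  exact Finset.sum_congr rfl fun _ _ => Finset.sum_congr rfl fun _ _ => mul_left_comm _ _ _

theorem sum_apply_metricDual_comm (e : ι → V) {ginv : ι → ι → ℝ}
    (hsymm : ∀ i j, ginv i j = ginv j i) (B : V →ₗ[ℝ] V →ₗ[ℝ] ℝ) :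
    ∑ k, B (metricDual e ginv k) (e k) = ∑ k, B (e k) (metricDual e ginv k) := by
  simp only [metricDual, map_sum, map_smul, LinearMap.sum_apply, LinearMap.smul_apply]
  rw [Finset.sum_comm]
  simp [hsymm]

variable [DecidableEq ι] (g : V →ₗ[ℝ] V →ₗ[ℝ] ℝ) (e : Module.Basis ι ℝ V) {ginv : ι → ι → ℝ}

theorem apply_metricDual_eq_repr
    (hginv : ∀ i j, ∑ k, ginv i k * g (e k) (e j) = if i = j then 1 else 0) (i : ι) (y : V) :
    g (metricDual e ginv i) y = e.repr y i := by
  have : g (metricDual e ginv i) = e.coord i := e.ext fun j => by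
    simp [metricDual, map_sum, hginv, Finsupp.single_apply, eq_comm]
  rw [this, e.coord_apply]

theorem ginv_comm (hg_symm : ∀ x y, g x y = g y x)
    (hginv : ∀ i j, ∑ k, ginv i k * g (e k) (e j) = if i = j then 1 else 0) (i j : ι) :
    ginv i j = ginv j i := by
  have hrepr : ∀ i j, ginv i j = g (metricDual e ginv j) (metricDual e ginv i) := fun i j => by
    rw [apply_metricDual_eq_repr g e hginv, metricDual, e.repr_sum_self]
  rw [hrepr, hg_symm, ← hrepr]

theorem apply_eq_sum_apply_basis_mul_apply_metricDual (hg_symm : ∀ x y, g x y = g y x)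
    (hginv : ∀ i j, ∑ k, ginv i k * g (e k) (e j) = if i = j then 1 else 0) (u v : V) :
    g u v = ∑ c, g u (e c) * g v (metricDual e ginv c) := by
  simp only [hg_symm v, apply_metricDual_eq_repr g e hginv]
  conv_lhs => rw [← e.sum_repr v]
  simp only [map_sum, map_smul, smul_eq_mul, mul_comm]

theorem sum_apply_metricDual_eq_trace (hg_symm : ∀ x y, g x y = g y x)
    (hginv : ∀ i j, ∑ k, ginv i k * g (e k) (e j) = if i = j then 1 else 0) (f : V →ₗ[ℝ] V) :
    ∑ k, g (f (e k)) (metricDual e ginv k) = LinearMap.trace ℝ V f := by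
  simp only [hg_symm (f _), apply_metricDual_eq_repr g e hginv,
    LinearMap.trace_eq_matrix_trace ℝ e, Matrix.trace, Matrix.diag, LinearMap.toMatrix_apply]

end MetricDual

theorem sum_mul_add_two_mul_sum_mul_swap_eq_zero {V ι : Type*} [Fintype ι] (T : V → V → V → ℝ)
    (hsymm : ∀ x y z, T x y z = T x z y) (hcyc : ∀ x y z, T x y z + T y z x + T z x y = 0)
    (u v : ι → V) :
    ∑ a, ∑ b, ∑ c, T (u a) (u b) (u c) * T (v a) (v b) (v c)
      + 2 * ∑ a, ∑ b, ∑ c, T (u a) (u b) (u c) * T (v b) (v a) (v c) = 0 := by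
  have hsum : ∑ a, ∑ b, ∑ c, T (u a) (u b) (u c) * T (v a) (v b) (v c)
      + ∑ a, ∑ b, ∑ c, T (u b) (u c) (u a) * T (v a) (v b) (v c)
      + ∑ a, ∑ b, ∑ c, T (u c) (u a) (u b) * T (v a) (v b) (v c) = 0 := by
    simp only [← Finset.sum_add_distrib]
    refine Finset.sum_eq_zero fun a _ => Finset.sum_eq_zero fun b _ =>
      Finset.sum_eq_zero fun c _ => ?_
    linear_combination T (v a) (v b) (v c) * hcyc (u a) (u b) (u c)
  have hswap : ∑ a, ∑ b, ∑ c, T (u b) (u c) (u a) * T (v a) (v b) (v c)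
      = ∑ a, ∑ b, ∑ c, T (u a) (u b) (u c) * T (v b) (v a) (v c) := by
    rw [Finset.sum_comm]
    simp only [hsymm (u _) (u _) (u _)]
  have hcycle : ∑ a, ∑ b, ∑ c, T (u c) (u a) (u b) * T (v a) (v b) (v c)
      = ∑ a, ∑ b, ∑ c, T (u a) (u b) (u c) * T (v b) (v a) (v c) := by
    rw [Finset.sum_congr rfl fun a _ => Finset.sum_comm, Finset.sum_comm]
    simp only [hsymm (v _) (v _) (v _)]
  linarith

section Norden

variable {V ι : Type*} [AddCommGroup V] [Module ℝ V] [Fintype ι] [DecidableEq ι]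
  (g : V →ₗ[ℝ] V →ₗ[ℝ] ℝ) (e : Module.Basis ι ℝ V) {ginv : ι → ι → ℝ}

theorem sum_sum_ginv_mul_apply_N_eq_zero (hg_symm : ∀ x y, g x y = g y x)
    (hginv : ∀ i j, ∑ k, ginv i k * g (e k) (e j) = if i = j then 1 else 0)
    {J : V →ₗ[ℝ] V} (hJ : ∀ x, J (J x) = -x) {N : V →ₗ[ℝ] V →ₗ[ℝ] V}
    (hN1 : ∀ x y z, g (N x y) z = g (N x z) y) (hN2 : ∀ x y, N x (J y) = -(J (N x y)))
    (hW3 : ∀ x y z, g (N x y) z + g (N y z) x + g (N z x) y = 0) (z : V) :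
    ∑ k, ∑ s, ginv k s * g (N (e k) (e s)) z = 0 := by
  have := Module.Free.of_basis e
  have := Module.Finite.of_basis e
  have hcontract : ∑ k, ∑ s, ginv k s * g (N (e k) (e s)) z
      = ∑ k, g (N (e k) (metricDual e ginv k)) z :=
    Finset.sum_congr rfl fun k _ => sum_ginv_mul_apply _ _ ((g.flip z).comp (N (e k))) k
  have htrace : ∑ k, g (N z (e k)) (metricDual e ginv k) = 0 :=
    (sum_apply_metricDual_eq_trace g e hg_symm hginv (N z)).trans
      (LinearMap.trace_eq_zero_of_anticomm hJ (hN2 z))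
  have hswap : ∑ k, g (N (metricDual e ginv k) z) (e k)
      = ∑ k, g (N (e k) (metricDual e ginv k)) z := by
    simpa [hN1 _ z] using
      sum_apply_metricDual_comm e (ginv_comm g e hg_symm hginv) (g.comp (N.flip z))
  have hW3sum := Finset.sum_eq_zero fun k (_ : k ∈ Finset.univ) =>
    hW3 (e k) (metricDual e ginv k) z
  simp only [Finset.sum_add_distrib, hswap, htrace] at hW3sum
  rw [hcontract]
  linarith

theorem sum_ginv_mul_ginv_mul_apply_N_N (hg_symm : ∀ x y, g x y = g y x)
    (hginv : ∀ i j, ∑ k, ginv i k * g (e k) (e j) = if i = j then 1 else 0)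
    (N : V →ₗ[ℝ] V →ₗ[ℝ] V) :
    ∑ i, ∑ j, ∑ k, ∑ s, ginv i j * ginv k s * g (N (e i) (e k)) (N (e j) (e s))
      = ∑ a, ∑ b, ∑ c, g (N (e a) (e b)) (e c)
          * g (N (metricDual e ginv a) (metricDual e ginv b)) (metricDual e ginv c) := by
  refine Finset.sum_congr rfl fun a _ => ?_
  rw [Finset.sum_comm]
  refine Finset.sum_congr rfl fun b _ => ?_
  calc _ = g (N (e a) (e b)) (N (metricDual e ginv a) (metricDual e ginv b)) := by
        simpa using sum_sum_ginv_mul_ginv_mul_apply (⇑e) ginv (N.compr₂ (g (N (e a) (e b)))) a b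
    _ = _ := apply_eq_sum_apply_basis_mul_apply_metricDual g e hg_symm hginv _ _

theorem sum_ginv_mul_ginv_mul_apply_N_N_swap (hg_symm : ∀ x y, g x y = g y x)
    (hginv : ∀ i j, ∑ k, ginv i k * g (e k) (e j) = if i = j then 1 else 0)
    (N : V →ₗ[ℝ] V →ₗ[ℝ] V) :
    ∑ i, ∑ j, ∑ k, ∑ s, ginv i j * ginv k s * g (N (e i) (e s)) (N (e k) (e j))
      = ∑ a, ∑ b, ∑ c, g (N (e a) (e b)) (e c)
          * g (N (metricDual e ginv b) (metricDual e ginv a)) (metricDual e ginv c) := by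
  refine Finset.sum_congr rfl fun a _ => ?_
  rw [Finset.sum_congr rfl fun j _ => Finset.sum_comm, Finset.sum_comm]
  refine Finset.sum_congr rfl fun b _ => ?_
  calc _ = ∑ j, ∑ k, ginv a j * ginv b k * g (N (e a) (e b)) (N (e k) (e j)) := by
        simp only [ginv_comm g e hg_symm hginv _ b]
    _ = g (N (e a) (e b)) (N (metricDual e ginv b) (metricDual e ginv a)) := by
        simpa using
          sum_sum_ginv_mul_ginv_mul_apply (⇑e) ginv (N.flip.compr₂ (g (N (e a) (e b)))) a b
    _ = _ := apply_eq_sum_apply_basis_mul_apply_metricDual g e hg_symm hginv _ _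

theorem scalarCurv_eq_sum_of_quasiKaehler (hg_symm : ∀ x y, g x y = g y x)
    (hginv : ∀ i j, ∑ k, ginv i k * g (e k) (e j) = if i = j then 1 else 0)
    {J : V →ₗ[ℝ] V} (hJ : ∀ x, J (J x) = -x) {N : V →ₗ[ℝ] V →ₗ[ℝ] V}
    (hN1 : ∀ x y z, g (N x y) z = g (N x z) y) (hN2 : ∀ x y, N x (J y) = -(J (N x y)))
    (hW3 : ∀ x y z, g (N x y) z + g (N y z) x + g (N z x) y = 0)
    {P : V → V → V → V → ℝ}
    (hP : ∀ x y z w, P x y z w = g (N x z) (N y w) - g (N y z) (N x w)) :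
    scalarCurv ginv e P
      = ∑ a, ∑ b, ∑ c, g (N (e a) (e b)) (e c)
          * g (N (metricDual e ginv b) (metricDual e ginv a)) (metricDual e ginv c) := by
  have htrace :
      ∑ i, ∑ j, ∑ k, ∑ s, ginv i j * ginv k s * g (N (e k) (e s)) (N (e i) (e j)) = 0 :=
    Finset.sum_eq_zero fun i _ => Finset.sum_eq_zero fun j _ => by
      simp only [mul_assoc, ← Finset.mul_sum,
        sum_sum_ginv_mul_apply_N_eq_zero g e hg_symm hginv hJ hN1 hN2 hW3, mul_zero]
  rw [scalarCurv_eq_sum, ← sum_ginv_mul_ginv_mul_apply_N_N_swap g e hg_symm hginv N]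
  simp only [hP, mul_sub, Finset.sum_sub_distrib, htrace, sub_zero]

end Norden

theorem isotropic_Kaehler_iff_general
    {V : Type*} [AddCommGroup V] [Module ℝ V]
    (g : V →ₗ[ℝ] V →ₗ[ℝ] ℝ) (hg_symm : ∀ x y, g x y = g y x)
    (J : V →ₗ[ℝ] V) (hJ : ∀ x, J (J x) = -x)
    (N : V →ₗ[ℝ] V →ₗ[ℝ] V)
    (hN1 : ∀ x y z, g (N x y) z = g (N x z) y)
    (hN2 : ∀ x y, N x (J y) = -(J (N x y)))
    (F : V → V → V → ℝ) (hF : ∀ x y z, F x y z = g (N x y) z)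
    (hW3 : ∀ x y z, F x y z + F y z x + F z x y = 0)
    (P : V → V → V → V → ℝ)
    (hP : ∀ x y z w, P x y z w = g (N x z) (N y w) - g (N y z) (N x w))
    {ι : Type*} [Fintype ι] [DecidableEq ι]
    (e : Module.Basis ι ℝ V) (ginv : ι → ι → ℝ)
    (hginv : ∀ i j, ∑ k, ginv i k * g (e k) (e j) = if i = j then 1 else 0)
    (R : V → V → V → V → ℝ)
    (K : V → V → V → V → ℝ)
    (hK : ∀ x y z w, K x y z w
      = (1/4) * (2 * R x y z w - 2 * R x y (J z) (J w) + P x y z w))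
    (tauStarStar : ℝ)
    (hTauStarStar : tauStarStar
      = ∑ i, ∑ j, ∑ k, ∑ s,
          ginv i j * ginv k s * R (e i) (e k) (J (e s)) (J (e j)))
    (sqNormNablaJ : ℝ)
    (hsqNorm : sqNormNablaJ
      = ∑ i, ∑ j, ∑ k, ∑ s,
          ginv i j * ginv k s * g (N (e i) (e k)) (N (e j) (e s)))
    (hTau : scalarCurv ginv (⇑e) R + tauStarStar = -(1/2) * sqNormNablaJ) :
    sqNormNablaJ = 0 ↔ scalarCurv ginv (⇑e) R = scalarCurv ginv (⇑e) K := by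
  have hW3' : ∀ x y z, g (N x y) z + g (N y z) x + g (N z x) y = 0 := fun x y z => by
    simpa only [hF] using hW3 x y z
  have hKsplit : K = (1/2 : ℝ) • R - (1/2 : ℝ) • (fun x y z w => R x y (J z) (J w))
      + (1/4 : ℝ) • P := by
    funext x y z w
    simp only [hK, Pi.add_apply, Pi.sub_apply, Pi.smul_apply, smul_eq_mul]
    ring
  have hτJ : scalarCurv ginv e (fun x y z w => R x y (J z) (J w)) = tauStarStar := by
    rw [scalarCurv_eq_sum, hTauStarStar]
  have hnorm := hsqNorm.trans (sum_ginv_mul_ginv_mul_apply_N_N g e hg_symm hginv N)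
  have hτP := scalarCurv_eq_sum_of_quasiKaehler g e hg_symm hginv hJ hN1 hN2 hW3' hP
  have hcyclic := sum_mul_add_two_mul_sum_mul_swap_eq_zero (fun x y z => g (N x y) z) hN1 hW3'
    e (metricDual e ginv)
  have hτK : scalarCurv ginv e K = scalarCurv ginv e R + sqNormNablaJ / 8 := by
    rw [hKsplit, scalarCurv_add, scalarCurv_sub, scalarCurv_smul, scalarCurv_smul,
      scalarCurv_smul, hτJ, hτP]
    linarith
  constructor <;> intro h <;> linarith

/-- (Proposition 3.1) A quasi-Kähler manifold with Norden metric is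
isotropic-Kähler (`‖∇J‖² = 0`) iff `τ = τ(K)`. -/
theorem isotropic_Kaehler_iff
    {V : Type*} [AddCommGroup V] [Module ℝ V]
    (g : V →ₗ[ℝ] V →ₗ[ℝ] ℝ) (hg_symm : ∀ x y, g x y = g y x)
    (J : V →ₗ[ℝ] V) (hJ : ∀ x, J (J x) = -x)
    (hgJ : ∀ x y, g (J x) (J y) = -(g x y))
    (N : V →ₗ[ℝ] V →ₗ[ℝ] V)
    (hN1 : ∀ x y z, g (N x y) z = g (N x z) y)
    (hN2 : ∀ x y, N x (J y) = -(J (N x y)))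
    (F : V → V → V → ℝ) (hF : ∀ x y z, F x y z = g (N x y) z)
    (hW3 : ∀ x y z, F x y z + F y z x + F z x y = 0)
    (P : V → V → V → V → ℝ)
    (hP : ∀ x y z w, P x y z w = g (N x z) (N y w) - g (N y z) (N x w))
    {ι : Type*} [Fintype ι] [DecidableEq ι]
    (e : Module.Basis ι ℝ V) (ginv : ι → ι → ℝ)
    (hginv : ∀ i j, ∑ k, ginv i k * g (e k) (e j) = if i = j then 1 else 0)
    (R : V → V → V → V → ℝ)
    (K : V → V → V → V → ℝ)
    (hK : ∀ x y z w, K x y z w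
      = (1/4) * (2 * R x y z w - 2 * R x y (J z) (J w) + P x y z w))
    (tauStarStar : ℝ)
    (hTauStarStar : tauStarStar
      = ∑ i, ∑ j, ∑ k, ∑ s,
          ginv i j * ginv k s * R (e i) (e k) (J (e s)) (J (e j)))
    (sqNormNablaJ : ℝ)
    (hsqNorm : sqNormNablaJ
      = ∑ i, ∑ j, ∑ k, ∑ s,
          ginv i j * ginv k s * g (N (e i) (e k)) (N (e j) (e s)))
    (hTau : scalarCurv ginv (⇑e) R + tauStarStar = -(1/2) * sqNormNablaJ) :
    sqNormNablaJ = 0 ↔ scalarCurv ginv (⇑e) R = scalarCurv ginv (⇑e) K :=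
  isotropic_Kaehler_iff_general g hg_symm J hJ N hN1 hN2 F hF hW3 P hP e ginv hginv R K hK
    tauStarStar hTauStarStar sqNormNablaJ hsqNorm hTau
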